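/- arXiv:2006.05667 — 2 statements merged into one kernel-verified Lean document; each statement's English description precedes it below -/
import Mathlib

section
/- Let p be a prime, G an abelian group, ι a nonempty finite index set, (H_i)_{i∈ι} a family of subgroups of G, and i* ∈ ι such that H_i ≤ H_{i*} for every i ∈ ι. For each i let Z_i = ℤ_p[G/H_i] be the group algebra over ℤ_p of the quotient group G/H_i, regarded as a module over the group algebra ℤ_p[G] via the projection G → G/H_i, and let ε_i : Z_i → ℤ_p be the augmentation map (sending each element of G/H_i to 1), where ℤ_p carries the ℤ_p[G]-module structure given by the augmentation of ℤ_p[G]. Let Z^0 be the kernel of the ℤ_p[G]-linear map ⊕_{i∈ι} Z_i → ℤ_p given by the sum of the ε_i. Then there is an isomorphism of ℤ_p[G]-modules Z^0 ≅ ker(ε_{i*}) ⊕ (⊕_{i∈ι, i≠i*} Z_i). -/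
open DirectSum

noncomputable section

/-- The augmentation map of a group algebra over `ℤ_p`, sending each element of the
monoid `Q` to `1`. -/
def aug (p : ℕ) [Fact p.Prime] (Q : Type) [Monoid Q] :
    MonoidAlgebra (PadicInt p) Q →+* PadicInt p :=
  ((MonoidAlgebra.lift (PadicInt p) (PadicInt p) Q) (1 : Q →* PadicInt p)).toRingHom

lemma aug_single (p : ℕ) [Fact p.Prime] (Q : Type) [Monoid Q] (q : Q) (b : PadicInt p) :
    aug p Q (MonoidAlgebra.single q b) = b := by
  show (MonoidAlgebra.lift (PadicInt p) (PadicInt p) Q) (1 : Q →* PadicInt p)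
      (MonoidAlgebra.single q b) = b
  rw [MonoidAlgebra.lift_single]
  simp

lemma mapDomainRingHom_single (p : ℕ) [Fact p.Prime] {Q₁ Q₂ : Type} [Monoid Q₁] [Monoid Q₂]
    (φ : Q₁ →* Q₂) (a : Q₁) (b : PadicInt p) :
    MonoidAlgebra.mapDomainRingHom (PadicInt p) φ (MonoidAlgebra.single a b)
      = MonoidAlgebra.single (φ a) b := by
  show MonoidAlgebra.mapDomain φ (MonoidAlgebra.single a b) = MonoidAlgebra.single (φ a) b
  exact MonoidAlgebra.mapDomain_single

lemma aug_comp (p : ℕ) [Fact p.Prime] {Q₁ Q₂ : Type} [Monoid Q₁] [Monoid Q₂]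
    (φ : Q₁ →* Q₂) :
    (aug p Q₂).comp (MonoidAlgebra.mapDomainRingHom (PadicInt p) φ) = aug p Q₁ := by
  apply MonoidAlgebra.ringHom_ext <;> intro x <;>
    simp [MonoidAlgebra.of_apply, mapDomainRingHom_single, aug_single]

/-- `Z_i = ℤ_p[G/H_i]`, as a type. -/
abbrev ZQ (p : ℕ) [Fact p.Prime] {G : Type} [CommGroup G] (H : Subgroup G) : Type :=
  MonoidAlgebra (PadicInt p) (G ⧸ H)

/-- The `ℤ_p[G]`-module structure on `ℤ_p[G/H]` via the projection `G → G/H`. -/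
instance (p : ℕ) [Fact p.Prime] {G : Type} [CommGroup G] (H : Subgroup G) :
    Module (MonoidAlgebra (PadicInt p) G) (ZQ p H) :=
  Module.compHom (ZQ p H)
    (MonoidAlgebra.mapDomainRingHom (PadicInt p) (QuotientGroup.mk' H))

/-- `ℤ_p` with the `ℤ_p[G]`-module structure coming from the augmentation map of
`ℤ_p[G]`. -/
abbrev ZAug (p : ℕ) [Fact p.Prime] (G : Type) [CommGroup G] : Type := PadicInt p

instance (p : ℕ) [Fact p.Prime] (G : Type) [CommGroup G] :
    Module (MonoidAlgebra (PadicInt p) G) (ZAug p G) :=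
  Module.compHom (ZAug p G) (aug p G)

/-- The augmentation map `ε : ℤ_p[G/H] → ℤ_p` as a `ℤ_p[G]`-linear map. -/
def εlin (p : ℕ) [Fact p.Prime] {G : Type} [CommGroup G] (H : Subgroup G) :
    ZQ p H →ₗ[MonoidAlgebra (PadicInt p) G] ZAug p G where
  toFun x := aug p (G ⧸ H) x
  map_add' x y := map_add (aug p (G ⧸ H)) x y
  map_smul' r x := by
    show aug p (G ⧸ H)
        ((MonoidAlgebra.mapDomainRingHom (PadicInt p) (QuotientGroup.mk' H)) r * x)
      = aug p G r * aug p (G ⧸ H) x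
    rw [map_mul, ← RingHom.comp_apply, aug_comp]

/-!
Let `π i : ℤ_p[G/H_i] → ℤ_p[G/H_{i*}]` be induced by the projection `G/H_i → G/H_{i*}`, so that
`ε_i = ε_{i*} ∘ π i` and `π i* = id`. The shear `(x_i) ↦ (∑ i, π i x_i, (x_i)_{i ≠ i*})` is then an
isomorphism `⊕ Z_i ≅ Z_{i*} × ⊕_{i ≠ i*} Z_i` which turns `∑ ε_i` into `ε_{i*}` on the first factor,
so it carries `Z⁰` onto `ker ε_{i*} × ⊕_{i ≠ i*} Z_i`.
-/

namespace LinearMap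

variable {R M₁ M₂ N : Type*} [Semiring R] [AddCommMonoid M₁] [AddCommMonoid M₂] [AddCommMonoid N]
  [Module R M₁] [Module R M₂] [Module R N]

def kerCompFstEquiv (f : M₁ →ₗ[R] N) : ker (f ∘ₗ fst R M₁ M₂) ≃ₗ[R] ker f × M₂ where
  toFun z := (⟨z.1.1, z.2⟩, z.1.2)
  invFun w := ⟨(w.1.1, w.2), w.1.2⟩
  map_add' _ _ := rfl
  map_smul' _ _ := rfl
  left_inv _ := rfl
  right_inv _ := rfl

end LinearMap

section Shear

variable {R : Type*} [Ring R] {ι : Type*} [DecidableEq ι] {M : ι → Type*}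
  [∀ i, AddCommGroup (M i)] [∀ i, Module R (M i)] {i₀ : ι} (π : ∀ i, M i →ₗ[R] M i₀)

namespace DirectSum

def shearToProd : (⨁ i, M i) →ₗ[R] M i₀ × ⨁ i : {i // i ≠ i₀}, M i :=
  (toModule R ι _ π).prod <| toModule R ι _ fun i =>
    if h : i = i₀ then 0 else lof R {i // i ≠ i₀} (fun j => M j) ⟨i, h⟩

def shearOfProd : (M i₀ × ⨁ i : {i // i ≠ i₀}, M i) →ₗ[R] ⨁ i, M i :=
  (lof R ι M i₀).coprod <| toModule R _ _ fun j => lof R ι M j - lof R ι M i₀ ∘ₗ π j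

variable {π}

theorem shearToProd_lof_self (hπ : π i₀ = LinearMap.id) (y : M i₀) :
    shearToProd π (lof R ι M i₀ y) = (y, 0) := by
  simp [shearToProd, hπ]

theorem shearToProd_lof_of_ne {i : ι} (h : i ≠ i₀) (y : M i) :
    shearToProd π (lof R ι M i y) = (π i y, lof R {i // i ≠ i₀} (fun j => M j) ⟨i, h⟩ y) := by
  simp [shearToProd, h]

variable (π) in
def shearEquiv (hπ : π i₀ = LinearMap.id) : (⨁ i, M i) ≃ₗ[R] M i₀ × ⨁ i : {i // i ≠ i₀}, M i :=
  LinearEquiv.ofLinearMap (shearToProd π) (shearOfProd π)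
    (by
      refine LinearMap.prod_ext (LinearMap.ext fun y => ?_)
        (linearMap_ext _ fun j => LinearMap.ext fun y => ?_)
      · simp [shearOfProd, shearToProd_lof_self hπ]
      · simp [shearOfProd, shearToProd_lof_self hπ, shearToProd_lof_of_ne j.2])
    (by
      refine linearMap_ext _ fun i => LinearMap.ext fun y => ?_
      by_cases h : i = i₀
      · subst h
        simp [shearToProd_lof_self hπ, shearOfProd]
      · simp [shearToProd_lof_of_ne h, shearOfProd])

theorem fst_comp_shearEquiv (hπ : π i₀ = LinearMap.id) :
    LinearMap.fst R _ _ ∘ₗ (shearEquiv π hπ).toLinearMap = toModule R ι _ π :=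
  rfl

variable {N : Type*} [AddCommMonoid N] [Module R N]

def kerToModuleCompEquiv (ε : M i₀ →ₗ[R] N) (hπ : π i₀ = LinearMap.id) :
    LinearMap.ker (toModule R ι N fun i => ε ∘ₗ π i) ≃ₗ[R]
      LinearMap.ker ε × ⨁ i : {i // i ≠ i₀}, M i :=
  have hfactor : toModule R ι N (fun i => ε ∘ₗ π i)
      = (ε ∘ₗ LinearMap.fst R _ _) ∘ₗ (shearEquiv π hπ).toLinearMap :=
    linearMap_ext _ fun i => LinearMap.ext fun y => by
      simp [LinearMap.comp_assoc, fst_comp_shearEquiv]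
  (LinearEquiv.ofEq _ _ (by rw [hfactor, LinearMap.ker_comp])).trans <|
    ((shearEquiv π hπ).ofSubmodule' _).trans (LinearMap.kerCompFstEquiv ε)

end DirectSum

end Shear

section QuotientMap

variable (p : ℕ) [Fact p.Prime] {G : Type} [CommGroup G] {H₁ H₂ : Subgroup G}

def ZQ.mapOfLE (h : H₁ ≤ H₂) : ZQ p H₁ →ₗ[MonoidAlgebra (PadicInt p) G] ZQ p H₂ where
  toFun := MonoidAlgebra.mapDomainRingHom (PadicInt p) (QuotientGroup.map H₁ H₂ (.id G) h)
  map_add' := map_add _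
  map_smul' r x := by
    have hmk : (QuotientGroup.map H₁ H₂ (.id G) h).comp (QuotientGroup.mk' H₁)
        = QuotientGroup.mk' H₂ := rfl
    change MonoidAlgebra.mapDomainRingHom _ (QuotientGroup.map H₁ H₂ (.id G) h)
        (MonoidAlgebra.mapDomainRingHom _ (QuotientGroup.mk' H₁) r * x)
      = MonoidAlgebra.mapDomainRingHom _ (QuotientGroup.mk' H₂) r * _
    rw [map_mul, ← RingHom.comp_apply, ← MonoidAlgebra.mapDomainRingHom_comp, hmk]

theorem ZQ.mapOfLE_self (h : H₁ ≤ H₁) : ZQ.mapOfLE p h = LinearMap.id :=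
  LinearMap.ext fun x => by
    change MonoidAlgebra.mapDomainRingHom _ (QuotientGroup.map H₁ H₁ (.id G) h) x = x
    rw [QuotientGroup.map_id, MonoidAlgebra.mapDomainRingHom_id]
    rfl

theorem εlin_comp_mapOfLE (h : H₁ ≤ H₂) : εlin p H₂ ∘ₗ ZQ.mapOfLE p h = εlin p H₁ :=
  LinearMap.ext fun x => congrArg (· x) (aug_comp p _)

end QuotientMap

theorem statement0_general (p : ℕ) [Fact p.Prime] (G : Type) [CommGroup G]
    (ι : Type) [DecidableEq ι]
    (H : ι → Subgroup G) (istar : ι) (hle : ∀ i, H i ≤ H istar) :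
    Nonempty
      ((LinearMap.ker
          (DirectSum.toModule (MonoidAlgebra (PadicInt p) G) ι (ZAug p G)
            fun i => εlin p (H i)))
        ≃ₗ[MonoidAlgebra (PadicInt p) G]
        (LinearMap.ker (εlin p (H istar)) ×
          ⨁ i : { i : ι // i ≠ istar }, ZQ p (H i.1))) := by
  have hfactor : (fun i => εlin p (H i)) = fun i => εlin p (H istar) ∘ₗ ZQ.mapOfLE p (hle i) :=
    funext fun i => (εlin_comp_mapOfLE p (hle i)).symm
  rw [hfactor]
  exact ⟨DirectSum.kerToModuleCompEquiv _ (ZQ.mapOfLE_self p (hle istar))⟩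

/-- Let `p` be a prime, `G` an abelian group, `ι` a nonempty finite index
set, `(H i)` a family of subgroups of `G` and `istar ∈ ι` with `H i ≤ H istar` for all `i`.
Let `Z⁰` be the kernel of the `ℤ_p[G]`-linear map `⊕ᵢ ℤ_p[G/Hᵢ] → ℤ_p` given by the sum
of the augmentation maps.  Then there is an isomorphism of `ℤ_p[G]`-modules
`Z⁰ ≅ ker(ε_{istar}) ⊕ (⊕_{i ≠ istar} ℤ_p[G/Hᵢ])`. -/
theorem statement0 (p : ℕ) [Fact p.Prime] (G : Type) [CommGroup G]
    (ι : Type) [Fintype ι] [Nonempty ι] [DecidableEq ι]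
    (H : ι → Subgroup G) (istar : ι) (hle : ∀ i, H i ≤ H istar) :
    Nonempty
      ((LinearMap.ker
          (DirectSum.toModule (MonoidAlgebra (PadicInt p) G) ι (ZAug p G)
            fun i => εlin p (H i)))
        ≃ₗ[MonoidAlgebra (PadicInt p) G]
        (LinearMap.ker (εlin p (H istar)) ×
          ⨁ i : { i : ι // i ≠ istar }, ZQ p (H i.1))) :=
  statement0_general p G ι H istar hle
end
end

section
/- Let R be a commutative ring, r ≥ 1 an integer, and ν_1,…,ν_r, s_1,…,s_r, d, t ∈ R. Let B be the (2r+2)×(r+1) matrix over R whose rows are: for each 1 ≤ i ≤ r, the row with −ν_i in column i, 1 in column r+1, and zeros elsewhere; then the row with d in column r+1 and zeros elsewhere; then, for each 1 ≤ i ≤ r, the row with s_i in column i and zeros elsewhere; and finally the row with t in column r+1 and zeros elsewhere. Then the ideal of R generated by all (r+1)×(r+1) minors of B is equal to the ideal of R generated by the following elements: t·∏_{i=1}^r ν_i, d·∏_{i=1}^r ν_i, and, for every proper subset J ⊊ {1,…,r}, the element ∏_{i∈J} ν_i · ∏_{i∉J} s_i (with the element for J = ∅ being ∏_{i=1}^r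 s_i). -/
/-- `minorsIdeal A e` is the ideal generated by the determinants of all `e × e`
submatrices of `A` (obtained by selecting `e` rows and `e` columns of `A`). -/
def minorsIdeal {R : Type*} [CommRing R] {m n : ℕ}
    (A : Matrix (Fin m) (Fin n) R) (e : ℕ) : Ideal R :=
  Ideal.span {x | ∃ (r : Fin e → Fin m) (c : Fin e → Fin n),
    StrictMono r ∧ StrictMono c ∧ x = (A.submatrix r c).det}


section Aux
variable {R : Type*} [CommRing R]

lemma det_singleEntry_ninj {n : ℕ} (w : Fin n → R) (p : Fin n → Fin n)
    (hp : ¬ Function.Injective p) :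
    Matrix.det (Matrix.of fun k l => if l = p k then w k else 0) = 0 := by
  have hsurj : ¬ Function.Surjective p := fun h => hp (Finite.injective_iff_surjective.2 h)
  simp only [Function.Surjective, not_forall, not_exists] at hsurj
  obtain ⟨l0, hl0⟩ := hsurj
  refine Matrix.det_eq_zero_of_column_eq_zero l0 (fun k => ?_)
  exact if_neg (fun h => hl0 k h.symm)

lemma det_singleEntry_bij {n : ℕ} (w : Fin n → R) (p : Fin n → Fin n)
    (hp : Function.Bijective p) :
    Matrix.det (Matrix.of fun k l => if l = p k then w k else 0)
      = ((Equiv.Perm.sign (Equiv.ofBijective p hp) : ℤ) : R) * ∏ k, w k := by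
  set σ := Equiv.ofBijective p hp with hσ
  have hM : (Matrix.of fun k l => if l = p k then w k else 0)
      = Matrix.diagonal w * Equiv.Perm.permMatrix R σ := by
    ext k l
    rw [Matrix.diagonal_mul]
    have h1 : σ k = p k := rfl
    simp only [Equiv.Perm.permMatrix, PEquiv.toMatrix_apply, Equiv.toPEquiv_apply,
      Option.mem_def, Option.some.injEq, Matrix.of_apply, h1]
    by_cases h : l = p k
    · simp [h]
    · rw [if_neg (fun hh : p k = l => h hh.symm), if_neg h, mul_zero]
  rw [hM, Matrix.det_mul, Matrix.det_diagonal, Matrix.det_permutation]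
  ring

end Aux

section BMat
variable {R : Type*} [CommRing R]

def Bmat (n : ℕ) (ν s : Fin n → R) (d t : R) :
    Matrix (Fin (2 * n + 2)) (Fin (n + 1)) R := fun i j =>
  if h : (i : ℕ) < n then
    (if (j : ℕ) = (i : ℕ) then -ν ⟨i, h⟩ else if (j : ℕ) = n then 1 else 0)
  else if h1 : (i : ℕ) = n then (if (j : ℕ) = n then d else 0)
  else if h2 : (i : ℕ) < 2 * n + 1 then
    (if (j : ℕ) = (i : ℕ) - (n + 1) then s ⟨(i : ℕ) - (n + 1), by omega⟩ else 0)
  else (if (j : ℕ) = n then t else 0)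

def colIdx (n : ℕ) (u : Fin (2 * n + 2)) : ℕ :=
  if (u : ℕ) < n then u else if (u : ℕ) = n then n
  else if (u : ℕ) < 2 * n + 1 then (u : ℕ) - (n + 1) else n

def valOf (n : ℕ) (ν s : Fin n → R) (d t : R) (u : Fin (2 * n + 2)) : R :=
  if h : (u : ℕ) < n then -ν ⟨u, h⟩ else if h1 : (u : ℕ) = n then d
  else if h2 : (u : ℕ) < 2 * n + 1 then s ⟨(u : ℕ) - (n + 1), by omega⟩ else t

lemma colIdx_le (n : ℕ) (u : Fin (2 * n + 2)) : colIdx n u ≤ n := by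
  unfold colIdx
  have := u.isLt
  split_ifs <;> omega

lemma Bmat_apply (n : ℕ) (ν s : Fin n → R) (d t : R) (u : Fin (2 * n + 2)) (j : Fin (n + 1)) :
    Bmat n ν s d t u j = (if (j : ℕ) = colIdx n u then valOf n ν s d t u else 0)
      + (if (u : ℕ) < n ∧ (j : ℕ) = n then 1 else 0) := by
  have hj := j.isLt
  have hu := u.isLt
  unfold Bmat colIdx valOf
  split_ifs
  any_goals ring
  all_goals exfalso
  all_goals omega

lemma Bmat_last (n : ℕ) (ν s : Fin n → R) (d t : R) (u : Fin (2 * n + 2)) :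
    Bmat n ν s d t u (Fin.last n) =
      if (u : ℕ) < n then 1 else if (u : ℕ) = n then d
      else if (u : ℕ) < 2 * n + 1 then 0 else t := by
  have hu := u.isLt
  unfold Bmat
  simp only [Fin.val_last]
  split_ifs
  any_goals ring
  all_goals exfalso
  all_goals omega

lemma Bmat_sub (n : ℕ) (ν s : Fin n → R) (d t : R) {m : ℕ} (g : Fin m → Fin (2 * n + 2))
    (k : Fin m) (l : Fin n) :
    (Bmat n ν s d t).submatrix g Fin.castSucc k l =
      if (l : ℕ) = colIdx n (g k) then valOf n ν s d t (g k) else 0 := by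
  have hl := l.isLt
  have hu := (g k).isLt
  simp only [Matrix.submatrix_apply]
  unfold Bmat colIdx valOf
  simp only [Fin.coe_castSucc]
  split_ifs
  any_goals ring
  all_goals exfalso
  all_goals omega

end BMat

section Det
variable {R : Type*} [CommRing R] (n : ℕ) (ν s : Fin n → R) (d t : R)

lemma detN_zero_of_colIdx_eq (g : Fin n → Fin (2 * n + 2)) (k0 : Fin n)
    (h : colIdx n (g k0) = n) :
    ((Bmat n ν s d t).submatrix g Fin.castSucc).det = 0 :=
  Matrix.det_eq_zero_of_row_eq_zero k0 (fun l => by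
    rw [Bmat_sub]
    exact if_neg (by have := l.isLt; omega))

lemma detN_of_lt (g : Fin n → Fin (2 * n + 2)) (h : ∀ k, colIdx n (g k) < n) :
    (Bmat n ν s d t).submatrix g Fin.castSucc =
      Matrix.of fun k l => if l = (⟨colIdx n (g k), h k⟩ : Fin n)
        then valOf n ν s d t (g k) else 0 := by
  ext k l
  rw [Bmat_sub, Matrix.of_apply]
  by_cases hh : (l : ℕ) = colIdx n (g k)
  · rw [if_pos hh, if_pos (Fin.ext hh)]
  · rw [if_neg hh, if_neg (fun he => hh (by rw [he]))]

/-- the set of positions covered by ν-rows in the range of `g`. -/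
def Jset (n : ℕ) (g : Fin n → Fin (2 * n + 2)) : Finset (Fin n) :=
  Finset.univ.filter (fun q => ∃ k, ((g k : ℕ) = (q : ℕ)))

lemma mem_Jset {n : ℕ} {g : Fin n → Fin (2 * n + 2)} {q : Fin n} :
    q ∈ Jset n g ↔ ∃ k, ((g k : ℕ) = (q : ℕ)) := by
  simp [Jset]

lemma prod_valOf (g : Fin n → Fin (2 * n + 2)) (h : ∀ k, colIdx n (g k) < n)
    (hp : Function.Bijective (fun k => (⟨colIdx n (g k), h k⟩ : Fin n))) :
    ∏ k, valOf n ν s d t (g k)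
      = (-1 : R) ^ (Jset n g).card *
          ((∏ q ∈ Jset n g, ν q) * ∏ q ∈ (Jset n g)ᶜ, s q) := by
  set p : Fin n → Fin n := fun k => ⟨colIdx n (g k), h k⟩ with hpdef
  set σ := Equiv.ofBijective p hp with hσ
  have h1 : ∏ k, valOf n ν s d t (g k) = ∏ q, valOf n ν s d t (g (σ.symm q)) :=
    (Equiv.prod_comp σ.symm fun k => valOf n ν s d t (g k)).symm
  have key : ∀ q : Fin n, valOf n ν s d t (g (σ.symm q)) =
      if q ∈ Jset n g then -ν q else s q := by
    intro q
    have hσq : colIdx n (g (σ.symm q)) = (q : ℕ) := by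
      have h2 : p (σ.symm q) = q := σ.apply_symm_apply q
      exact congrArg Fin.val h2
    by_cases hq : q ∈ Jset n g
    · rw [if_pos hq]
      obtain ⟨k, hk⟩ := mem_Jset.1 hq
      have hklt : (g k : ℕ) < n := by rw [hk]; exact q.isLt
      have hpk : p k = q := by
        apply Fin.ext
        show colIdx n (g k) = (q : ℕ)
        unfold colIdx
        rw [if_pos hklt]; exact hk
      have hsk : σ.symm q = k := by
        rw [← hpk]
        exact σ.symm_apply_apply k
      rw [hsk]
      unfold valOf
      rw [dif_pos hklt]
      have : (⟨(g k : ℕ), hklt⟩ : Fin n) = q := Fin.ext hk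
      rw [this]
    · rw [if_neg hq]
      have hq' : ∀ k, ¬ ((g k : ℕ) = (q : ℕ)) := by
        intro k hk
        exact hq (mem_Jset.2 ⟨k, hk⟩)
      set k := σ.symm q with hkdef
      have hqlt := q.isLt
      have hnlt : ¬ ((g k : ℕ) < n) := by
        intro hlt
        apply hq' k
        have : colIdx n (g k) = (g k : ℕ) := by unfold colIdx; rw [if_pos hlt]
        omega
      have h2 : ¬ ((g k : ℕ) = n) := by
        intro he
        have : colIdx n (g k) = n := by unfold colIdx; rw [if_neg hnlt, if_pos he]
        omega
      have h3 : (g k : ℕ) < 2 * n + 1 := by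
        by_contra hc
        have : colIdx n (g k) = n := by
          unfold colIdx; rw [if_neg hnlt, if_neg h2, if_neg hc]
        omega
      have h4 : colIdx n (g k) = (g k : ℕ) - (n + 1) := by
        unfold colIdx; rw [if_neg hnlt, if_neg h2, if_pos h3]
      unfold valOf
      rw [dif_neg hnlt, dif_neg h2, dif_pos h3]
      have : (⟨(g k : ℕ) - (n + 1), by omega⟩ : Fin n) = q :=
        Fin.ext (show (g k : ℕ) - (n + 1) = (q : ℕ) by omega)
      rw [this]
  rw [h1, Finset.prod_congr rfl (fun q _ => key q),
    ← Finset.prod_mul_prod_compl (Jset n g)]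
  have e1 : ∏ q ∈ Jset n g, (if q ∈ Jset n g then -ν q else s q) = ∏ q ∈ Jset n g, -ν q :=
    Finset.prod_congr rfl (fun q hq => if_pos hq)
  have e2 : ∏ q ∈ (Jset n g)ᶜ, (if q ∈ Jset n g then -ν q else s q)
      = ∏ q ∈ (Jset n g)ᶜ, s q :=
    Finset.prod_congr rfl (fun q hq => if_neg (Finset.mem_compl.1 hq))
  rw [e1, e2]
  have e3 : ∏ q ∈ Jset n g, -ν q = (-1 : R) ^ (Jset n g).card * ∏ q ∈ Jset n g, ν q := by
    calc ∏ q ∈ Jset n g, -ν q = ∏ q ∈ Jset n g, (-1 : R) * ν q := by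
          refine Finset.prod_congr rfl (fun q _ => by ring)
      _ = (∏ _q ∈ Jset n g, (-1 : R)) * ∏ q ∈ Jset n g, ν q := Finset.prod_mul_distrib
      _ = (-1 : R) ^ (Jset n g).card * ∏ q ∈ Jset n g, ν q := by rw [Finset.prod_const]
  rw [e3]; ring

lemma detN_good (g : Fin n → Fin (2 * n + 2)) (hcol : ∀ k, colIdx n (g k) < n)
    (hpb : Function.Bijective (fun k => (⟨colIdx n (g k), hcol k⟩ : Fin n))) :
    ∃ z : R, z * z = 1 ∧
      ((Bmat n ν s d t).submatrix g Fin.castSucc).det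
        = z * ((∏ q ∈ Jset n g, ν q) * ∏ q ∈ (Jset n g)ᶜ, s q) := by
  refine ⟨((Equiv.Perm.sign (Equiv.ofBijective _ hpb) : ℤ) : R) * (-1) ^ (Jset n g).card,
    ?_, ?_⟩
  · have hs : ((Equiv.Perm.sign (Equiv.ofBijective _ hpb) : ℤ) : R) *
        ((Equiv.Perm.sign (Equiv.ofBijective _ hpb) : ℤ) : R) = 1 := by
      rw [← Int.cast_mul, ← Units.val_mul, Int.units_mul_self, Units.val_one, Int.cast_one]
    have hpow : ((-1 : R) ^ (Jset n g).card) * ((-1 : R) ^ (Jset n g).card) = 1 := by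
      rw [← pow_add, ← two_mul, pow_mul]; norm_num
    calc _ = (((Equiv.Perm.sign (Equiv.ofBijective _ hpb) : ℤ) : R) *
            ((Equiv.Perm.sign (Equiv.ofBijective _ hpb) : ℤ) : R)) *
          (((-1 : R) ^ (Jset n g).card) * ((-1 : R) ^ (Jset n g).card)) := by ring
      _ = 1 := by rw [hs, hpow, one_mul]
  · rw [detN_of_lt n ν s d t g hcol, det_singleEntry_bij _ _ hpb,
      prod_valOf n ν s d t g hcol hpb]
    ring

lemma detN_cases (g : Fin n → Fin (2 * n + 2)) :
    ((Bmat n ν s d t).submatrix g Fin.castSucc).det = 0 ∨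
    ∃ z : R, z * z = 1 ∧
      ((Bmat n ν s d t).submatrix g Fin.castSucc).det
        = z * ((∏ q ∈ Jset n g, ν q) * ∏ q ∈ (Jset n g)ᶜ, s q) := by
  by_cases hcol : ∀ k, colIdx n (g k) < n
  · by_cases hpi : Function.Injective (fun k => (⟨colIdx n (g k), hcol k⟩ : Fin n))
    · exact Or.inr (detN_good n ν s d t g hcol (Finite.injective_iff_bijective.1 hpi))
    · left
      rw [detN_of_lt n ν s d t g hcol]
      exact det_singleEntry_ninj _ _ hpi
  · left
    push_neg at hcol
    obtain ⟨k0, hk0⟩ := hcol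
    exact detN_zero_of_colIdx_eq n ν s d t g k0 (by have := colIdx_le n (g k0); omega)

lemma det_expand (rsel : Fin (n + 1) → Fin (2 * n + 2)) :
    ((Bmat n ν s d t).submatrix rsel id).det
      = ∑ i : Fin (n + 1), (-1 : R) ^ ((i : ℕ) + n) * Bmat n ν s d t (rsel i) (Fin.last n) *
          ((Bmat n ν s d t).submatrix (rsel ∘ i.succAbove) Fin.castSucc).det := by
  rw [Matrix.det_succ_column _ (Fin.last n)]
  refine Finset.sum_congr rfl fun i _ => ?_
  rw [Fin.succAbove_last, Matrix.submatrix_submatrix]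
  simp only [Matrix.submatrix_apply, id_eq, Fin.val_last, Function.id_comp]

end Det

section Main
variable {R : Type*} [CommRing R] (n : ℕ) (ν s : Fin n → R) (d t : R)

def genSet : Set R :=
  ({t * ∏ i, ν i, d * ∏ i, ν i} : Set R) ∪
    {x | ∃ J : Finset (Fin n), J ≠ Finset.univ ∧
      x = (∏ i ∈ J, ν i) * ∏ i ∈ Jᶜ, s i}

lemma mem_of_unit_mul {I : Ideal R} {z x g : R} (hz : z * z = 1) (hx : x ∈ I)
    (h : x = z * g) : g ∈ I := by
  have hg : g = z * x := by rw [h, ← mul_assoc, hz, one_mul]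
  rw [hg]
  exact Ideal.mul_mem_left _ _ hx

lemma main_mem (rsel : Fin (n + 1) → Fin (2 * n + 2)) (hinj : Function.Injective rsel) :
    ((Bmat n ν s d t).submatrix rsel id).det ∈ Ideal.span (genSet n ν s d t) := by
  rw [det_expand]
  refine Ideal.sum_mem _ fun i _ => ?_
  rcases detN_cases n ν s d t (rsel ∘ i.succAbove) with h0 | ⟨z, hz, hdet⟩
  · rw [h0, mul_zero]
    exact Ideal.zero_mem _
  · rw [hdet, Bmat_last]
    set J' := Jset n (rsel ∘ i.succAbove) with hJ'
    by_cases h1 : (rsel i : ℕ) < n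
    · rw [if_pos h1]
      have hJne : J' ≠ Finset.univ := by
        intro hu
        have hmem : (⟨(rsel i : ℕ), h1⟩ : Fin n) ∈ J' := by
          rw [hu]; exact Finset.mem_univ _
        obtain ⟨k, hk⟩ := mem_Jset.1 hmem
        have : rsel (i.succAbove k) = rsel i := Fin.ext hk
        exact Fin.succAbove_ne i k (hinj this)
      have hgen : (∏ q ∈ J', ν q) * ∏ q ∈ J'ᶜ, s q ∈ genSet n ν s d t :=
        Or.inr ⟨J', hJne, rfl⟩
      have he : (-1 : R) ^ ((i : ℕ) + n) * 1 * (z * ((∏ q ∈ J', ν q) * ∏ q ∈ J'ᶜ, s q))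
          = ((-1 : R) ^ ((i : ℕ) + n) * z) * ((∏ q ∈ J', ν q) * ∏ q ∈ J'ᶜ, s q) := by ring
      rw [he]
      exact Ideal.mul_mem_left _ _ (Ideal.subset_span hgen)
    · rw [if_neg h1]
      by_cases h2 : (rsel i : ℕ) = n
      · rw [if_pos h2]
        by_cases hJ : J' = Finset.univ
        · rw [hJ, Finset.compl_univ, Finset.prod_empty, mul_one]
          have he : (-1 : R) ^ ((i : ℕ) + n) * d * (z * ∏ q, ν q)
              = ((-1 : R) ^ ((i : ℕ) + n) * z) * (d * ∏ q, ν q) := by ring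
          rw [he]
          have hgen : d * ∏ q, ν q ∈ genSet n ν s d t :=
            Or.inl (Set.mem_insert_iff.2 (Or.inr rfl))
          exact Ideal.mul_mem_left _ _ (Ideal.subset_span hgen)
        · have hgen : (∏ q ∈ J', ν q) * ∏ q ∈ J'ᶜ, s q ∈ genSet n ν s d t :=
            Or.inr ⟨J', hJ, rfl⟩
          have he : (-1 : R) ^ ((i : ℕ) + n) * d * (z * ((∏ q ∈ J', ν q) * ∏ q ∈ J'ᶜ, s q))
              = ((-1 : R) ^ ((i : ℕ) + n) * d * z) * ((∏ q ∈ J', ν q) * ∏ q ∈ J'ᶜ, s q) := by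
            ring
          rw [he]
          exact Ideal.mul_mem_left _ _ (Ideal.subset_span hgen)
      · rw [if_neg h2]
        by_cases h3 : (rsel i : ℕ) < 2 * n + 1
        · rw [if_pos h3, mul_zero, zero_mul]
          exact Ideal.zero_mem _
        · rw [if_neg h3]
          by_cases hJ : J' = Finset.univ
          · rw [hJ, Finset.compl_univ, Finset.prod_empty, mul_one]
            have he : (-1 : R) ^ ((i : ℕ) + n) * t * (z * ∏ q, ν q)
                = ((-1 : R) ^ ((i : ℕ) + n) * z) * (t * ∏ q, ν q) := by ring
            rw [he]
            have hgen : t * ∏ q, ν q ∈ genSet n ν s d t :=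
              Or.inl (Set.mem_insert_iff.2 (Or.inl rfl))
            exact Ideal.mul_mem_left _ _ (Ideal.subset_span hgen)
          · have hgen : (∏ q ∈ J', ν q) * ∏ q ∈ J'ᶜ, s q ∈ genSet n ν s d t :=
              Or.inr ⟨J', hJ, rfl⟩
            have he : (-1 : R) ^ ((i : ℕ) + n) * t *
                  (z * ((∏ q ∈ J', ν q) * ∏ q ∈ J'ᶜ, s q))
                = ((-1 : R) ^ ((i : ℕ) + n) * t * z) *
                  ((∏ q ∈ J', ν q) * ∏ q ∈ J'ᶜ, s q) := by ring
            rw [he]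
            exact Ideal.mul_mem_left _ _ (Ideal.subset_span hgen)

end Main

section Rev
variable {R : Type*} [CommRing R] (n : ℕ) (ν s : Fin n → R) (d t : R)

lemma det_family1 (u0 : Fin (2 * n + 2)) (hcol : colIdx n u0 = n)
    (rsel : Fin (n + 1) → Fin (2 * n + 2))
    (hlt : ∀ i : Fin (n + 1), (h : (i : ℕ) < n) → rsel i = ⟨(i : ℕ), by omega⟩)
    (hlast : rsel (Fin.last n) = u0) :
    ((Bmat n ν s d t).submatrix rsel id).det
      = (-1 : R) ^ n * (Bmat n ν s d t u0 (Fin.last n) * ∏ q, ν q) := by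
  have hg : ∀ k : Fin n, rsel ((Fin.last n).succAbove k) = ⟨(k : ℕ), by omega⟩ := by
    intro k
    have h1 : (Fin.last n).succAbove k = Fin.castSucc k := by
      rw [Fin.succAbove_last]
    rw [h1, hlt (Fin.castSucc k) (by rw [Fin.coe_castSucc]; exact k.isLt)]
    exact Fin.ext (by rw [Fin.coe_castSucc])
  rw [det_expand]
  rw [Finset.sum_eq_single (Fin.last n)]
  · have hM : (Bmat n ν s d t).submatrix (rsel ∘ (Fin.last n).succAbove) Fin.castSucc
        = Matrix.diagonal (fun k => -ν k) := by
      ext k l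
      rw [Matrix.submatrix_apply, Function.comp_apply, hg k]
      have hkv : ((⟨(k : ℕ), by omega⟩ : Fin (2 * n + 2)) : ℕ) = (k : ℕ) := rfl
      by_cases he : k = l
      · subst he
        rw [Matrix.diagonal_apply_eq]
        unfold Bmat
        rw [dif_pos (show ((⟨(k : ℕ), by omega⟩ : Fin (2 * n + 2)) : ℕ) < n from k.isLt),
          if_pos (show ((Fin.castSucc k : Fin (n + 1)) : ℕ)
            = ((⟨(k : ℕ), by omega⟩ : Fin (2 * n + 2)) : ℕ) from rfl)]
      · rw [Matrix.diagonal_apply_ne _ he]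
        unfold Bmat
        rw [dif_pos (show ((⟨(k : ℕ), by omega⟩ : Fin (2 * n + 2)) : ℕ) < n from k.isLt)]
        have h2 : ¬ ((Fin.castSucc l : Fin (n + 1)) : ℕ)
            = ((⟨(k : ℕ), by omega⟩ : Fin (2 * n + 2)) : ℕ) := by
          intro hh
          exact he (Fin.ext (by rw [hkv] at hh; rw [← hh, Fin.coe_castSucc]))
        rw [if_neg h2, if_neg (by rw [Fin.coe_castSucc]; have := l.isLt; omega)]
    rw [hM, Matrix.det_diagonal, hlast]
    have hprod : ∏ k, -ν k = (-1 : R) ^ n * ∏ k, ν k := by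
      calc ∏ k, -ν k = ∏ k : Fin n, (-1 : R) * ν k := by
            refine Finset.prod_congr rfl (fun q _ => by ring)
        _ = (∏ _k : Fin n, (-1 : R)) * ∏ k, ν k := Finset.prod_mul_distrib
        _ = (-1 : R) ^ n * ∏ k, ν k := by
            rw [Finset.prod_const, Finset.card_univ, Fintype.card_fin]
    rw [hprod, Fin.val_last]
    have h3 : (-1 : R) ^ (n + n) = 1 := by
      rw [← two_mul, pow_mul]; norm_num
    rw [h3]; ring
  · intro i _ hne
    obtain ⟨k0, hk0⟩ := Fin.exists_succAbove_eq (Ne.symm hne)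
    have hz : ((Bmat n ν s d t).submatrix (rsel ∘ i.succAbove) Fin.castSucc).det = 0 := by
      refine detN_zero_of_colIdx_eq n ν s d t _ k0 ?_
      rw [Function.comp_apply, hk0, hlast, hcol]
    rw [hz, mul_zero]
  · intro h
    exact absurd (Finset.mem_univ _) h

end Rev

section FamJ
variable {R : Type*} [CommRing R] (n : ℕ) (ν s : Fin n → R) (d t : R)

def νrow (q : Fin n) : Fin (2 * n + 2) := ⟨(q : ℕ), by omega⟩
def srow (q : Fin n) : Fin (2 * n + 2) := ⟨n + 1 + (q : ℕ), by omega⟩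

lemma νrow_val (q : Fin n) : ((νrow n q) : ℕ) = (q : ℕ) := rfl
lemma srow_val (q : Fin n) : ((srow n q) : ℕ) = n + 1 + (q : ℕ) := rfl

lemma νrow_inj : Function.Injective (νrow n) := fun a b h =>
  Fin.ext (by have h2 := congrArg Fin.val h; rw [νrow_val, νrow_val] at h2; exact h2)

lemma srow_inj : Function.Injective (srow n) := fun a b h =>
  Fin.ext (by have h2 := congrArg Fin.val h; rw [srow_val, srow_val] at h2; omega)

lemma νrow_ne_srow (q q' : Fin n) : νrow n q ≠ srow n q' := fun h => by
  have h2 := congrArg Fin.val h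
  rw [νrow_val, srow_val] at h2
  have := q.isLt
  omega

lemma colIdx_νrow (q : Fin n) : colIdx n (νrow n q) = (q : ℕ) := by
  unfold colIdx
  rw [νrow_val, if_pos q.isLt]

lemma colIdx_srow (q : Fin n) : colIdx n (srow n q) = (q : ℕ) := by
  have hq := q.isLt
  unfold colIdx
  rw [srow_val, if_neg (by omega), if_neg (by omega), if_pos (by omega)]
  omega

lemma Bmat_last_νrow (q : Fin n) : Bmat n ν s d t (νrow n q) (Fin.last n) = 1 := by
  rw [Bmat_last, νrow_val, if_pos q.isLt]

lemma Bmat_last_srow (q : Fin n) : Bmat n ν s d t (srow n q) (Fin.last n) = 0 := by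
  have hq := q.isLt
  rw [Bmat_last, srow_val, if_neg (by omega), if_neg (by omega), if_pos (by omega)]

end FamJ

section FamJ2
variable {R : Type*} [CommRing R] (n : ℕ) (ν s : Fin n → R) (d t : R)

lemma det_familyJ (J : Finset (Fin n)) (q0 : Fin n) (hq0 : q0 ∉ J) :
    ∃ (rsel : Fin (n + 1) → Fin (2 * n + 2)) (z : R), StrictMono rsel ∧ z * z = 1 ∧
      ((Bmat n ν s d t).submatrix rsel id).det
        = z * ((∏ q ∈ J, ν q) * ∏ q ∈ Jᶜ, s q) := by
  classical
  set S : Finset (Fin (2 * n + 2)) :=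
    (insert q0 J).image (νrow n) ∪ Jᶜ.image (srow n) with hS
  have hmemS : ∀ u : Fin (2 * n + 2), u ∈ S ↔
      ((∃ q ∈ insert q0 J, νrow n q = u) ∨ (∃ q ∈ Jᶜ, srow n q = u)) := by
    intro u
    simp only [hS, Finset.mem_union, Finset.mem_image]
  have hdisj : Disjoint ((insert q0 J).image (νrow n)) (Jᶜ.image (srow n)) := by
    rw [Finset.disjoint_left]
    intro u hu1 hu2
    obtain ⟨q, _, hq⟩ := Finset.mem_image.1 hu1
    obtain ⟨q', _, hq'⟩ := Finset.mem_image.1 hu2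
    exact νrow_ne_srow n q q' (hq.trans hq'.symm)
  have hcard : S.card = n + 1 := by
    rw [hS, Finset.card_union_of_disjoint hdisj,
      Finset.card_image_of_injective _ (νrow_inj n),
      Finset.card_image_of_injective _ (srow_inj n),
      Finset.card_insert_of_notMem hq0, Finset.card_compl]
    have h1 : J.card ≤ n := by
      have h2 := Finset.card_le_univ J
      rwa [Fintype.card_fin] at h2
    rw [Fintype.card_fin]
    omega
  set rsel : Fin (n + 1) → Fin (2 * n + 2) := fun i => S.orderEmbOfFin hcard i with hrsel
  have hmono : StrictMono rsel := (S.orderEmbOfFin hcard).strictMono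
  have hinj : Function.Injective rsel := hmono.injective
  have hmem : ∀ i, rsel i ∈ S := fun i => Finset.orderEmbOfFin_mem S hcard i
  have hsur : ∀ u ∈ S, ∃ i, rsel i = u := by
    intro u hu
    have h2 : u ∈ Set.range (S.orderEmbOfFin hcard) := by
      rw [Finset.range_orderEmbOfFin]; exact hu
    obtain ⟨i, hi⟩ := h2
    exact ⟨i, hi⟩
  have hν0S : νrow n q0 ∈ S :=
    (hmemS _).2 (Or.inl ⟨q0, Finset.mem_insert_self _ _, rfl⟩)
  have hs0S : srow n q0 ∈ S :=
    (hmemS _).2 (Or.inr ⟨q0, Finset.mem_compl.2 hq0, rfl⟩)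
  obtain ⟨i0, hi0⟩ := hsur (νrow n q0) hν0S
  have hcolS : ∀ u ∈ S, colIdx n u < n := by
    intro u hu
    rcases (hmemS u).1 hu with ⟨q, _, hq⟩ | ⟨q, _, hq⟩
    · rw [← hq, colIdx_νrow]; exact q.isLt
    · rw [← hq, colIdx_srow]; exact q.isLt
  -- the good submatrix at i0
  set g : Fin n → Fin (2 * n + 2) := rsel ∘ i0.succAbove with hg
  have hgmem : ∀ k, g k ∈ S := fun k => hmem _
  have hgne : ∀ k, g k ≠ νrow n q0 := by
    intro k he
    rw [← hi0] at he
    exact Fin.succAbove_ne i0 k (hinj he)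
  have hcolg : ∀ k, colIdx n (g k) < n := fun k => hcolS _ (hgmem k)
  have hginj : Function.Injective g := hinj.comp (Fin.succAbove_right_injective)
  have hpinj : Function.Injective (fun k => (⟨colIdx n (g k), hcolg k⟩ : Fin n)) := by
    intro k1 k2 h12
    have hval : colIdx n (g k1) = colIdx n (g k2) := congrArg Fin.val h12
    apply hginj
    rcases (hmemS _).1 (hgmem k1) with ⟨q1, hq1m, hq1⟩ | ⟨q1, hq1m, hq1⟩ <;>
      rcases (hmemS _).1 (hgmem k2) with ⟨q2, hq2m, hq2⟩ | ⟨q2, hq2m, hq2⟩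
    · rw [← hq1, ← hq2, colIdx_νrow, colIdx_νrow] at hval
      rw [← hq1, ← hq2, Fin.ext hval]
    · exfalso
      rw [← hq1, ← hq2, colIdx_νrow, colIdx_srow] at hval
      have he12 : q1 = q2 := Fin.ext hval
      subst he12
      have hq1J : q1 ∉ J := Finset.mem_compl.1 hq2m
      have hq1q0 : q1 = q0 := (Finset.mem_insert.1 hq1m).resolve_right hq1J
      subst hq1q0
      exact hgne k1 hq1.symm
    · exfalso
      rw [← hq1, ← hq2, colIdx_srow, colIdx_νrow] at hval
      have he12 : q1 = q2 := Fin.ext hval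
      subst he12
      have hq1J : q1 ∉ J := Finset.mem_compl.1 hq1m
      have hq1q0 : q1 = q0 := (Finset.mem_insert.1 hq2m).resolve_right hq1J
      subst hq1q0
      exact hgne k2 hq2.symm
    · rw [← hq1, ← hq2, colIdx_srow, colIdx_srow] at hval
      rw [← hq1, ← hq2, Fin.ext hval]
  obtain ⟨z, hz, hdet⟩ :=
    detN_good n ν s d t g hcolg (Finite.injective_iff_bijective.1 hpinj)
  have hJset : Jset n g = J := by
    ext q
    rw [mem_Jset]
    constructor
    · rintro ⟨k, hk⟩
      rcases (hmemS _).1 (hgmem k) with ⟨q', hq'm, hq'⟩ | ⟨q', _, hq'⟩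
      · have hv : (q' : ℕ) = (q : ℕ) := by
          rw [← hq', νrow_val] at hk; exact hk
        have hqq : q' = q := Fin.ext hv
        subst hqq
        rcases Finset.mem_insert.1 hq'm with he | hm
        · exfalso
          exact hgne k (by rw [← hq', he])
        · exact hm
      · exfalso
        rw [← hq', srow_val] at hk
        have := q.isLt
        omega
    · intro hqJ
      have hne : q ≠ q0 := fun he => hq0 (he ▸ hqJ)
      have hνS : νrow n q ∈ S :=
        (hmemS _).2 (Or.inl ⟨q, Finset.mem_insert_of_mem hqJ, rfl⟩)
      obtain ⟨i1, hi1⟩ := hsur _ hνS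
      have hi1ne : i1 ≠ i0 := by
        intro he
        exact hne (νrow_inj n (by rw [← hi1, he, hi0]))
      obtain ⟨k, hk⟩ := Fin.exists_succAbove_eq hi1ne
      refine ⟨k, ?_⟩
      have : g k = νrow n q := by
        rw [hg, Function.comp_apply, hk, hi1]
      rw [this, νrow_val]
  have hdetA : ((Bmat n ν s d t).submatrix rsel id).det
      = ((-1 : R) ^ ((i0 : ℕ) + n) * z) * ((∏ q ∈ J, ν q) * ∏ q ∈ Jᶜ, s q) := by
    rw [det_expand, Finset.sum_eq_single i0]
    · rw [hi0, Bmat_last_νrow, ← hg, hdet, hJset]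
      ring
    · intro i _ hne
      rcases (hmemS _).1 (hmem i) with ⟨q, hqm, hq⟩ | ⟨q, _, hq⟩
      · -- νrow row with q ≠ q0 : the minor is singular
        have hqq0 : q ≠ q0 := by
          intro he
          apply hne
          apply hinj
          rw [← hq, he, hi0]
        have hcoli : ∀ k, colIdx n ((rsel ∘ i.succAbove) k) < n :=
          fun k => hcolS _ (hmem _)
        have hne1 : i0 ≠ i := by
          intro he
          have hq' := hq
          rw [← he] at hq'
          exact hqq0 (νrow_inj n (hq'.trans hi0))
        obtain ⟨k1, hk1⟩ := Fin.exists_succAbove_eq hne1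
        obtain ⟨i2, hi2⟩ := hsur _ hs0S
        have hne2 : i2 ≠ i := by
          intro he
          exact νrow_ne_srow n q q0 (hq.trans (by rw [← he, hi2]))
        obtain ⟨k2, hk2⟩ := Fin.exists_succAbove_eq hne2
        have hpninj : ¬ Function.Injective
            (fun k => (⟨colIdx n ((rsel ∘ i.succAbove) k), hcoli k⟩ : Fin n)) := by
          intro hpi
          have hc1 : colIdx n ((rsel ∘ i.succAbove) k1) = (q0 : ℕ) := by
            simp only [Function.comp_apply, hk1, hi0, colIdx_νrow]
          have hc2 : colIdx n ((rsel ∘ i.succAbove) k2) = (q0 : ℕ) := by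
            simp only [Function.comp_apply, hk2, hi2, colIdx_srow]
          have hk12 : k1 = k2 := hpi (Fin.ext (by
            show colIdx n ((rsel ∘ i.succAbove) k1) = colIdx n ((rsel ∘ i.succAbove) k2)
            rw [hc1, hc2]))
          have hcontra : νrow n q0 = srow n q0 := by
            calc νrow n q0 = rsel i0 := hi0.symm
              _ = rsel (i.succAbove k1) := by rw [hk1]
              _ = rsel (i.succAbove k2) := by rw [hk12]
              _ = srow n q0 := by rw [hk2, hi2]
          exact νrow_ne_srow n q0 q0 hcontra
        rw [detN_of_lt n ν s d t _ hcoli, det_singleEntry_ninj _ _ hpninj, mul_zero]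
      · rw [← hq, Bmat_last_srow, mul_zero, zero_mul]
    · intro h
      exact absurd (Finset.mem_univ _) h
  refine ⟨rsel, (-1 : R) ^ ((i0 : ℕ) + n) * z, hmono, ?_, hdetA⟩
  have hp : (-1 : R) ^ ((i0 : ℕ) + n) * (-1 : R) ^ ((i0 : ℕ) + n) = 1 := by
    rw [← pow_add, ← two_mul, pow_mul]; norm_num
  calc (-1 : R) ^ ((i0 : ℕ) + n) * z * ((-1 : R) ^ ((i0 : ℕ) + n) * z)
      = ((-1 : R) ^ ((i0 : ℕ) + n) * (-1 : R) ^ ((i0 : ℕ) + n)) * (z * z) := by ring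
    _ = 1 := by rw [hp, hz, one_mul]

end FamJ2

theorem statement7' {R : Type*} [CommRing R] (r : ℕ)
    (ν s : Fin r → R) (d t : R) :
    minorsIdeal (Bmat r ν s d t) (r + 1) = Ideal.span (genSet r ν s d t) := by
  apply le_antisymm
  · rw [minorsIdeal]
    refine Ideal.span_le.2 ?_
    rintro x ⟨rs, c, hrs, hc, hx⟩
    have hcb : Function.Bijective c := Finite.injective_iff_bijective.1 hc.injective
    have hrange : Set.range c = Set.range (id : Fin (r + 1) → Fin (r + 1)) := by
      rw [Set.range_id, Set.range_eq_univ]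
      exact hcb.2
    have hc_id : c = id :=
      (@StrictMono.range_inj (Fin (r + 1)) (Fin (r + 1)) inferInstance inferInstance
        (inferInstanceAs (WellFoundedLT (Fin (r + 1)))) c id hc strictMono_id).1 hrange
    rw [hc_id] at hx
    rw [hx]
    exact main_mem r ν s d t rs hrs.injective
  · refine Ideal.span_le.2 ?_
    rintro x (hx | ⟨J, hJne, rfl⟩)
    · -- the two distinguished generators
      have hgen : ∀ u0 : Fin (2 * r + 2), colIdx r u0 = r → r ≤ (u0 : ℕ) →
          Bmat r ν s d t u0 (Fin.last r) * ∏ q, ν q ∈ minorsIdeal (Bmat r ν s d t) (r + 1) := by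
        intro u0 hcol hge
        set rsel : Fin (r + 1) → Fin (2 * r + 2) :=
          fun i => if h : (i : ℕ) < r then (⟨(i : ℕ), by omega⟩ : Fin (2 * r + 2)) else u0
          with hrsel
        have hmono : StrictMono rsel := by
          intro a b hab
          have hab' : (a : ℕ) < (b : ℕ) := hab
          have hb := b.isLt
          simp only [hrsel]
          split_ifs with h1 h2 h2
          · exact Fin.mk_lt_mk.2 hab'
          · exact Fin.mk_lt_of_lt_val (by omega)
          · exact absurd rfl (by omega : ¬ (0 = 0)) -- impossible: a ≥ r, b < r
          · exact absurd rfl (by omega : ¬ (0 = 0)) -- impossible: a = b = r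
        have hlt : ∀ i : Fin (r + 1), (h : (i : ℕ) < r) →
            rsel i = ⟨(i : ℕ), by omega⟩ := by
          intro i h
          simp only [hrsel]
          rw [dif_pos h]
        have hlast : rsel (Fin.last r) = u0 := by
          simp only [hrsel]
          rw [dif_neg (by simp [Fin.val_last])]
        have hdet := det_family1 r ν s d t u0 hcol rsel hlt hlast
        have hdm : ((Bmat r ν s d t).submatrix rsel id).det
            ∈ minorsIdeal (Bmat r ν s d t) (r + 1) :=
          Ideal.subset_span ⟨rsel, id, hmono, strictMono_id, rfl⟩
        have hz : (-1 : R) ^ r * (-1 : R) ^ r = 1 := by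
          rw [← pow_add, ← two_mul, pow_mul]; norm_num
        exact mem_of_unit_mul hz hdm hdet
      rcases Set.mem_insert_iff.1 hx with rfl | hx2
      · -- t * ∏ ν
        have hval : ((⟨2 * r + 1, by omega⟩ : Fin (2 * r + 2)) : ℕ) = 2 * r + 1 := rfl
        have hcol : colIdx r (⟨2 * r + 1, by omega⟩ : Fin (2 * r + 2)) = r := by
          unfold colIdx
          rw [hval, if_neg (by omega), if_neg (by omega), if_neg (by omega)]
        have hB : Bmat r ν s d t (⟨2 * r + 1, by omega⟩ : Fin (2 * r + 2)) (Fin.last r)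
            = t := by
          rw [Bmat_last, hval, if_neg (by omega), if_neg (by omega), if_neg (by omega)]
        have := hgen (⟨2 * r + 1, by omega⟩ : Fin (2 * r + 2)) hcol (by rw [hval]; omega)
        rwa [hB] at this
      · -- d * ∏ ν
        rcases Set.mem_singleton_iff.1 hx2 with rfl
        have hval : ((⟨r, by omega⟩ : Fin (2 * r + 2)) : ℕ) = r := rfl
        have hcol : colIdx r (⟨r, by omega⟩ : Fin (2 * r + 2)) = r := by
          unfold colIdx
          rw [hval, if_neg (by omega), if_pos rfl]
        have hB : Bmat r ν s d t (⟨r, by omega⟩ : Fin (2 * r + 2)) (Fin.last r) = d := by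
          rw [Bmat_last, hval, if_neg (by omega), if_pos rfl]
        have := hgen (⟨r, by omega⟩ : Fin (2 * r + 2)) hcol (by rw [hval])
        rwa [hB] at this
    · -- the generators ∏_J ν * ∏_{Jᶜ} s
      have hex : ∃ q0, q0 ∉ J := by
        by_contra h
        push_neg at h
        exact hJne (Finset.eq_univ_iff_forall.2 h)
      obtain ⟨q0, hq0⟩ := hex
      obtain ⟨rsel, z, hmono, hz, hdet⟩ := det_familyJ r ν s d t J q0 hq0
      exact mem_of_unit_mul hz
        (Ideal.subset_span ⟨rsel, id, hmono, strictMono_id, rfl⟩) hdet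


/-- Let `R` be a commutative ring, `r ≥ 1`, and
`ν₁, …, ν_r, s₁, …, s_r, d, t ∈ R`.  Let `B` be the `(2r+2) × (r+1)` matrix whose rows
are: for `1 ≤ i ≤ r` the row with `−νᵢ` in column `i` and `1` in column `r+1`; then the
row with `d` in column `r+1`; then for `1 ≤ i ≤ r` the row with `sᵢ` in column `i`; and
finally the row with `t` in column `r+1` (all other entries being `0`).  Then the ideal
generated by the `(r+1) × (r+1)` minors of `B` is generated by `t·∏ᵢ νᵢ`, `d·∏ᵢ νᵢ`, and
the elements `∏_{i∈J} νᵢ · ∏_{i∉J} sᵢ` for the proper subsets `J ⊊ {1, …, r}`. -/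
theorem statement7 {R : Type*} [CommRing R] (r : ℕ) (hr : 1 ≤ r)
    (ν s : Fin r → R) (d t : R) :
    let B : Matrix (Fin (2 * r + 2)) (Fin (r + 1)) R := fun i j =>
      if h : (i : ℕ) < r then
        (if (j : ℕ) = (i : ℕ) then -ν ⟨i, h⟩ else if (j : ℕ) = r then 1 else 0)
      else if (i : ℕ) = r then (if (j : ℕ) = r then d else 0)
      else if h2 : (i : ℕ) < 2 * r + 1 then
        (if (j : ℕ) = (i : ℕ) - (r + 1) then s ⟨(i : ℕ) - (r + 1), by omega⟩ else 0)
      else (if (j : ℕ) = r then t else 0)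
    minorsIdeal B (r + 1) =
      Ideal.span (({t * ∏ i, ν i, d * ∏ i, ν i} : Set R) ∪
        {x | ∃ J : Finset (Fin r), J ≠ Finset.univ ∧
          x = (∏ i ∈ J, ν i) * ∏ i ∈ Jᶜ, s i}) := by
  intro B
  have hB : B = Bmat r ν s d t := by
    funext i j
    show Bmat r ν s d t i j = Bmat r ν s d t i j
    rfl
  rw [hB]
  exact statement7' r ν s d t
end
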